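/- Let z₁,…,z_N ∈ ℝ² with z_i ≺ z_j for all i < j, let K ≥ 2, and let OPT be the optimal K-center value (continuous or discrete). Then the greedy backward procedure (at each step from the right, taking the largest interval cluster with cost ≤ OPT) produces a partition of {z₁,…,z_N} into K interval clusters each of 1-center cost at most OPT, i.e., an optimal partition. -/
import Mathlib


noncomputable section

abbrev Pt : Type := EuclideanSpace ℝ (Fin 2)

/-- Strict Pareto dominance on ℝ²: `y ≺ z` iff `y¹ < z¹` and `y² > z²`. -/
def prec (y z : Pt) : Prop := y 0 < z 0 ∧ z 1 < y 1

/-- Continuous 1-center cost of a cluster of indices (0 for the empty cluster). -/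
def cCost (x : ℕ → Pt) (P : Finset ℕ) : ℝ :=
  if h : P.Nonempty then ⨅ y : Pt, P.sup' h (fun j => dist (x j) y) else 0

/-- Discrete 1-center cost of a cluster of indices (0 for the empty cluster). -/
def dCost (x : ℕ → Pt) (P : Finset ℕ) : ℝ :=
  if h : P.Nonempty then
    P.inf' h (fun c => P.sup' h (fun j => dist (x j) (x c))) else 0

/-- `π` is a partition of `S` into `k` nonempty parts. -/
def IsPartitionOf (π : Finset (Finset ℕ)) (S : Finset ℕ) (k : ℕ) : Prop :=
  (∀ p ∈ π, p.Nonempty) ∧ (π : Set (Finset ℕ)).PairwiseDisjoint id ∧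
    π.sup id = S ∧ π.card = k

/-- k-center objective of a partition: maximum cluster cost. -/
def kObj (cost : Finset ℕ → ℝ) (π : Finset (Finset ℕ)) : ℝ :=
  if h : π.Nonempty then π.sup' h cost else 0

/-- Optimal k-center value on the index set `S`: infimum of the objective
over all partitions of `S` into `k` nonempty parts. -/
def CVal (cost : Finset ℕ → ℝ) (S : Finset ℕ) (k : ℕ) : ℝ :=
  sInf (kObj cost '' {π | IsPartitionOf π S k})

section helpers
variable {z : ℕ → Pt} {N : ℕ}

lemma coord0_mono (mono : ∀ i j : ℕ, i < j → j ≤ N → prec (z i) (z j))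
    {i j : ℕ} (hij : i ≤ j) (hjN : j ≤ N) : z i 0 ≤ z j 0 := by
  rcases eq_or_lt_of_le hij with rfl | h
  · exact le_refl _
  · exact le_of_lt (mono i j h hjN).1

lemma coord1_anti (mono : ∀ i j : ℕ, i < j → j ≤ N → prec (z i) (z j))
    {i j : ℕ} (hij : i ≤ j) (hjN : j ≤ N) : z j 1 ≤ z i 1 := by
  rcases eq_or_lt_of_le hij with rfl | h
  · exact le_refl _
  · exact le_of_lt (mono i j h hjN).2

lemma dist_pt (x y : Pt) :
    dist x y = Real.sqrt ((x 0 - y 0)^2 + (x 1 - y 1)^2) := by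
  rw [EuclideanSpace.dist_eq, Fin.sum_univ_two]
  simp [Real.dist_eq, sq_abs]

lemma dist_mono_right (mono : ∀ i j : ℕ, i < j → j ≤ N → prec (z i) (z j))
    {i j l : ℕ} (h1 : i ≤ j) (h2 : j ≤ l) (h3 : l ≤ N) :
    dist (z i) (z j) ≤ dist (z i) (z l) := by
  rw [dist_pt, dist_pt]
  apply Real.sqrt_le_sqrt
  have a0 := coord0_mono mono h1 (le_trans h2 h3)
  have a1 := coord0_mono mono h2 h3
  have b0 := coord1_anti mono h1 (le_trans h2 h3)
  have b1 := coord1_anti mono h2 h3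
  nlinarith [sq_nonneg (z i 0 - z j 0), sq_nonneg (z i 1 - z j 1)]

lemma dist_mono_left (mono : ∀ i j : ℕ, i < j → j ≤ N → prec (z i) (z j))
    {i j l : ℕ} (h1 : i ≤ j) (h2 : j ≤ l) (h3 : l ≤ N) :
    dist (z j) (z l) ≤ dist (z i) (z l) := by
  rw [dist_pt, dist_pt]
  apply Real.sqrt_le_sqrt
  have a0 := coord0_mono mono h1 (le_trans h2 h3)
  have a1 := coord0_mono mono h2 h3
  have b0 := coord1_anti mono h1 (le_trans h2 h3)
  have b1 := coord1_anti mono h2 h3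
  nlinarith [sq_nonneg (z j 0 - z l 0), sq_nonneg (z j 1 - z l 1)]

lemma dist_center (mono : ∀ i j : ℕ, i < j → j ≤ N → prec (z i) (z j))
    {i j l : ℕ} (h1 : i ≤ j) (h2 : j ≤ l) (h3 : l ≤ N) :
    dist (z j) ((2⁻¹ : ℝ) • (z i + z l)) ≤ dist (z i) (z l) / 2 := by
  have hy0 : ((2⁻¹ : ℝ) • (z i + z l)) 0 = (z i 0 + z l 0)/2 := by
    simp [PiLp.smul_apply, PiLp.add_apply]; ring
  have hy1 : ((2⁻¹ : ℝ) • (z i + z l)) 1 = (z i 1 + z l 1)/2 := by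
    simp [PiLp.smul_apply, PiLp.add_apply]; ring
  rw [dist_pt, dist_pt, hy0, hy1]
  have a0 := coord0_mono mono h1 (le_trans h2 h3)
  have a1 := coord0_mono mono h2 h3
  have b0 := coord1_anti mono h1 (le_trans h2 h3)
  have b1 := coord1_anti mono h2 h3
  set A := (z j 0 - (z i 0 + z l 0)/2)^2 + (z j 1 - (z i 1 + z l 1)/2)^2 with hA
  set B := (z i 0 - z l 0)^2 + (z i 1 - z l 1)^2 with hB
  have hAn : 0 ≤ A := by positivity
  have h4 : A * 4 ≤ B := by
    rw [hA, hB]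
    nlinarith [mul_nonneg (sub_nonneg.2 a0) (sub_nonneg.2 a1),
      mul_nonneg (sub_nonneg.2 b1) (sub_nonneg.2 b0)]
  have hs : Real.sqrt (A * 4) ≤ Real.sqrt B := Real.sqrt_le_sqrt h4
  rw [Real.sqrt_mul hAn, show Real.sqrt 4 = 2 by
    rw [show (4:ℝ) = 2^2 by norm_num, Real.sqrt_sq (by norm_num)]] at hs
  linarith

lemma half_le_max (a e : ℕ) (y : Pt) :
    dist (z a) (z e) / 2 ≤ max (dist (z a) y) (dist (z e) y) := by
  have h0 := dist_triangle (z a) y (z e)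
  have h1 : dist y (z e) = dist (z e) y := dist_comm _ _
  rcases le_total (dist (z a) y) (dist (z e) y) with h | h
  · rw [max_eq_right h]; linarith
  · rw [max_eq_left h]; linarith

lemma cCost_nonneg (P : Finset ℕ) : 0 ≤ cCost z P := by
  unfold cCost
  split
  · rename_i h
    apply Real.iInf_nonneg
    intro y
    obtain ⟨j, hj⟩ := h
    exact le_trans dist_nonneg (Finset.le_sup' (fun j => dist (z j) _) hj)
  · exact le_refl 0

lemma dCost_nonneg (P : Finset ℕ) : 0 ≤ dCost z P := by
  unfold dCost
  split
  · rename_i h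
    apply Finset.le_inf' h
    intro c hc
    obtain ⟨j, hj⟩ := h
    exact le_trans dist_nonneg (Finset.le_sup' (fun j => dist (z j) _) hj)
  · exact le_refl 0

lemma cCost_empty : cCost z ∅ = 0 := by simp [cCost]
lemma dCost_empty : dCost z ∅ = 0 := by simp [dCost]

lemma cCost_interval_le (mono : ∀ i j : ℕ, i < j → j ≤ N → prec (z i) (z j))
    (P : Finset ℕ) (hP : P.Nonempty) (hsub : ∀ x ∈ P, x ≤ N)
    (c : ℕ) (hac : P.min' hP ≤ c) (hce : c ≤ P.max' hP) :
    cCost z (Finset.Icc (P.min' hP) c) ≤ cCost z P := by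
  set a := P.min' hP with ha
  set e := P.max' hP with he
  have heN : e ≤ N := hsub _ (P.max'_mem hP)
  have hI : (Finset.Icc a c).Nonempty := ⟨a, Finset.mem_Icc.2 ⟨le_refl _, hac⟩⟩
  unfold cCost
  rw [dif_pos hI, dif_pos hP]
  have step1 : (⨅ y : Pt, (Finset.Icc a c).sup' hI (fun j => dist (z j) y))
      ≤ dist (z a) (z e) / 2 := by
    have hb : BddBelow (Set.range fun y : Pt =>
        (Finset.Icc a c).sup' hI (fun j => dist (z j) y)) := by
      refine ⟨0, ?_⟩
      rintro _ ⟨y, rfl⟩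
      obtain ⟨j, hj⟩ := hI
      exact le_trans dist_nonneg (Finset.le_sup' (fun j => dist (z j) _) hj)
    refine le_trans (ciInf_le hb ((2⁻¹ : ℝ) • (z a + z e))) ?_
    apply Finset.sup'_le
    intro j hj
    rw [Finset.mem_Icc] at hj
    exact dist_center mono hj.1 (le_trans hj.2 hce) heN
  refine le_trans step1 (le_ciInf fun y => ?_)
  refine le_trans (half_le_max a e y) ?_
  rcases max_cases (dist (z a) y) (dist (z e) y) with ⟨h, _⟩ | ⟨h, _⟩ <;> rw [h]
  · exact Finset.le_sup' (fun j => dist (z j) y) (P.min'_mem hP)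
  · exact Finset.le_sup' (fun j => dist (z j) y) (P.max'_mem hP)

lemma dCost_interval_le (mono : ∀ i j : ℕ, i < j → j ≤ N → prec (z i) (z j))
    (P : Finset ℕ) (hP : P.Nonempty) (hsub : ∀ x ∈ P, x ≤ N)
    (c : ℕ) (hac : P.min' hP ≤ c) (hce : c ≤ P.max' hP) :
    dCost z (Finset.Icc (P.min' hP) c) ≤ dCost z P := by
  set a := P.min' hP with ha
  set e := P.max' hP with he
  have heN : e ≤ N := hsub _ (P.max'_mem hP)
  have hcN : c ≤ N := le_trans hce heN
  have hI : (Finset.Icc a c).Nonempty := ⟨a, Finset.mem_Icc.2 ⟨le_refl _, hac⟩⟩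
  unfold dCost
  rw [dif_pos hI, dif_pos hP]
  apply Finset.le_inf' hP
  intro c' hc'
  have hc'N : c' ≤ N := hsub _ hc'
  have hac' : a ≤ c' := P.min'_le _ hc'
  have hc'e : c' ≤ e := P.le_max' _ hc'
  have hm : min c c' ∈ Finset.Icc a c :=
    Finset.mem_Icc.2 ⟨le_min hac hac', min_le_left _ _⟩
  refine le_trans (Finset.inf'_le _ hm) ?_
  apply Finset.sup'_le
  intro j hj
  rw [Finset.mem_Icc] at hj
  have hja : a ≤ j := hj.1
  have hjc : j ≤ c := hj.2
  have key : dist (z j) (z (min c c')) ≤ (P.sup' hP fun j => dist (z j) (z c')) := by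
    rcases le_total c' c with h | h
    · rw [min_eq_right h]
      rcases le_total j c' with hj' | hj'
      · exact le_trans (dist_mono_left mono hja hj' hc'N) (Finset.le_sup' (fun j => dist (z j) (z c')) (P.min'_mem hP))
      · have : dist (z j) (z c') ≤ dist (z e) (z c') := by
          rw [dist_comm (z j), dist_comm (z e)]
          exact dist_mono_right mono hj' (le_trans hjc hce) heN
        exact le_trans this (Finset.le_sup' (fun j => dist (z j) (z c')) (P.max'_mem hP))
    · rw [min_eq_left h]
      have h1 : dist (z j) (z c) ≤ dist (z j) (z c') := dist_mono_right mono hjc h hc'N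
      have h2 : dist (z j) (z c') ≤ dist (z a) (z c') :=
        dist_mono_left mono hja (le_trans hjc h) hc'N
      exact le_trans h1 (le_trans h2 (Finset.le_sup' (fun j => dist (z j) (z c')) (P.min'_mem hP)))
  exact key

end helpers


lemma base_partition {N K : ℕ} (hK : 1 ≤ K) (hKN : K ≤ N) :
    IsPartitionOf ((Finset.Icc 1 K).image
      (fun j => if j = K then Finset.Icc K N else {j})) (Finset.Icc 1 N) K := by
  set f : ℕ → Finset ℕ := fun j => if j = K then Finset.Icc K N else {j} with hf
  have hinj : Set.InjOn f (Finset.Icc 1 K) := by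
    intro j1 h1 j2 h2 heq
    simp only [Finset.coe_Icc, Set.mem_Icc] at h1 h2
    by_cases e1 : j1 = K <;> by_cases e2 : j2 = K
    · omega
    · exfalso
      rw [hf] at heq; simp only [if_pos e1, if_neg e2] at heq
      have : j2 ∈ Finset.Icc K N := by rw [heq]; exact Finset.mem_singleton_self _
      rw [Finset.mem_Icc] at this; omega
    · exfalso
      rw [hf] at heq; simp only [if_neg e1, if_pos e2] at heq
      have : j1 ∈ Finset.Icc K N := by rw [← heq]; exact Finset.mem_singleton_self _
      rw [Finset.mem_Icc] at this; omega
    · rw [hf] at heq; simp only [if_neg e1, if_neg e2] at heq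
      exact Finset.singleton_injective heq
  refine ⟨?_, ?_, ?_, ?_⟩
  · intro p hp
    rw [Finset.mem_image] at hp
    obtain ⟨j, hj, rfl⟩ := hp
    rw [Finset.mem_Icc] at hj
    by_cases e : j = K
    · rw [hf]; simp only [if_pos e]
      exact ⟨K, Finset.mem_Icc.2 ⟨le_refl _, hKN⟩⟩
    · rw [hf]; simp only [if_neg e]
      exact ⟨j, Finset.mem_singleton_self _⟩
  · intro p hp q hq hpq
    simp only [Finset.coe_image, Set.mem_image] at hp hq
    obtain ⟨j1, hj1, rfl⟩ := hp
    obtain ⟨j2, hj2, rfl⟩ := hq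
    have hne : j1 ≠ j2 := fun h => hpq (by rw [h])
    simp only [Finset.coe_Icc, Set.mem_Icc] at hj1 hj2
    rw [Function.onFun, Finset.disjoint_left]
    intro x hx1 hx2
    simp only [id_eq] at hx1 hx2
    rw [hf] at hx1 hx2
    by_cases e1 : j1 = K <;> by_cases e2 : j2 = K
    · omega
    · simp only [if_pos e1] at hx1; simp only [if_neg e2] at hx2
      rw [Finset.mem_Icc] at hx1; rw [Finset.mem_singleton] at hx2; omega
    · simp only [if_neg e1] at hx1; simp only [if_pos e2] at hx2
      rw [Finset.mem_singleton] at hx1; rw [Finset.mem_Icc] at hx2; omega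
    · simp only [if_neg e1] at hx1; simp only [if_neg e2] at hx2
      rw [Finset.mem_singleton] at hx1 hx2; omega
  · apply Finset.Subset.antisymm
    · show (Finset.image f (Finset.Icc 1 K)).sup id ≤ Finset.Icc 1 N
      apply Finset.sup_le
      intro p hp
      rw [Finset.mem_image] at hp
      obtain ⟨j, hj, rfl⟩ := hp
      rw [Finset.mem_Icc] at hj
      intro x hx
      simp only [id_eq] at hx
      rw [hf] at hx
      by_cases e : j = K
      · simp only [if_pos e] at hx
        rw [Finset.mem_Icc] at hx ⊢; omega
      · simp only [if_neg e] at hx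
        rw [Finset.mem_singleton] at hx
        rw [Finset.mem_Icc]; omega
    · intro x hx
      rw [Finset.mem_Icc] at hx
      by_cases hxK : x < K
      · have hm : f x ∈ (Finset.Icc 1 K).image f :=
          Finset.mem_image_of_mem f (Finset.mem_Icc.2 ⟨hx.1, le_of_lt hxK⟩)
        refine Finset.mem_of_subset (Finset.le_sup (f := id) hm) ?_
        show x ∈ f x
        rw [hf]; simp only [if_neg (Nat.ne_of_lt hxK)]
        exact Finset.mem_singleton_self _
      · have hm : f K ∈ (Finset.Icc 1 K).image f :=
          Finset.mem_image_of_mem f (Finset.mem_Icc.2 ⟨hK, le_refl _⟩)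
        refine Finset.mem_of_subset (Finset.le_sup (f := id) hm) ?_
        have hfK : f K = Finset.Icc K N := by rw [hf]; simp
        show x ∈ f K
        rw [hfK, Finset.mem_Icc]; omega
  · rw [Finset.card_image_of_injOn hinj, Nat.card_Icc]; omega

lemma partitions_finite (S : Finset ℕ) (k : ℕ) :
    {π | IsPartitionOf π S k}.Finite := by
  apply Set.Finite.subset (Finset.finite_toSet (S.powerset.powerset))
  intro π hπ
  rw [Finset.mem_coe, Finset.mem_powerset]
  intro p hp
  rw [Finset.mem_powerset]
  have h2 := Finset.le_sup (f := id) hp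
  rw [hπ.2.2.1] at h2
  exact h2

/-- The greedy backward procedure (taking, from the right, the largest interval
cluster of cost at most `OPT`) produces a partition of `[1, N]` into `K`
interval clusters, each of 1-center cost at most `OPT`, i.e. an optimal
partition: the breakpoints are (weakly) increasing and the remaining first
cluster `[1, b 1]` also has cost at most `OPT`. -/
theorem greedy_backward_is_optimal (N K : ℕ) (hK : 2 ≤ K) (hKN : K ≤ N)
    (z : ℕ → Pt) (mono : ∀ i j : ℕ, i < j → j ≤ N → prec (z i) (z j))
    (cost : Finset ℕ → ℝ) (hcost : cost = cCost z ∨ cost = dCost z)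
    (OPT : ℝ) (hOPT : OPT = CVal cost (Finset.Icc 1 N) K)
    -- `b` encodes the greedy breakpoints, with the convention `b K = N`:
    -- the cluster `[b k + 1, b (k+1)]` is the largest interval ending at
    -- `b (k+1)` whose cost is at most `OPT`.
    (b : ℕ → ℕ) (hbK : b K = N)
    (hgreedy : ∀ k : ℕ, 1 ≤ k → k ≤ K - 1 →
      cost (Finset.Icc (b k + 1) (b (k + 1))) ≤ OPT ∧
      ∀ m : ℕ, m < b k → ¬ cost (Finset.Icc (m + 1) (b (k + 1))) ≤ OPT) :
    (∀ k : ℕ, 1 ≤ k → k ≤ K - 1 → b k ≤ b (k + 1)) ∧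
    cost (Finset.Icc 1 (b 1)) ≤ OPT := by
  have cost_nonneg : ∀ P : Finset ℕ, 0 ≤ cost P := by
    rcases hcost with rfl | rfl
    · exact cCost_nonneg (z := z)
    · exact dCost_nonneg (z := z)
  have cost_empty : cost ∅ = 0 := by
    rcases hcost with rfl | rfl
    · exact cCost_empty (z := z)
    · exact dCost_empty (z := z)
  have cost_interval : ∀ (P : Finset ℕ) (hP : P.Nonempty), (∀ x ∈ P, x ≤ N) →
      ∀ c : ℕ, P.min' hP ≤ c → c ≤ P.max' hP →
      cost (Finset.Icc (P.min' hP) c) ≤ cost P := by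
    rcases hcost with rfl | rfl
    · exact fun P hP hs c h1 h2 => cCost_interval_le mono P hP hs c h1 h2
    · exact fun P hP hs c h1 h2 => dCost_interval_le mono P hP hs c h1 h2
  -- OPT is nonnegative
  have hOPTnn : 0 ≤ OPT := by
    rw [hOPT]
    apply Real.sInf_nonneg
    rintro x ⟨π, hπ, rfl⟩
    unfold kObj
    split
    · rename_i h
      obtain ⟨p, hp⟩ := h
      exact le_trans (cost_nonneg p) (Finset.le_sup' cost hp)
    · exact le_refl 0
  -- Part 1: monotonicity of breakpoints
  have part1 : ∀ k : ℕ, 1 ≤ k → k ≤ K - 1 → b k ≤ b (k + 1) := by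
    intro k hk1 hk2
    by_contra hlt
    push_neg at hlt
    refine (hgreedy k hk1 hk2).2 (b (k+1)) hlt ?_
    rw [Finset.Icc_eq_empty (by omega), cost_empty]
    exact hOPTnn
  refine ⟨part1, ?_⟩
  -- existence of an optimal partition
  have hne : (kObj cost '' {π | IsPartitionOf π (Finset.Icc 1 N) K}).Nonempty :=
    ⟨_, ⟨_, base_partition (by omega) hKN, rfl⟩⟩
  have hfin : (kObj cost '' {π | IsPartitionOf π (Finset.Icc 1 N) K}).Finite :=
    Set.Finite.image _ (partitions_finite _ _)
  have hmem : OPT ∈ kObj cost '' {π | IsPartitionOf π (Finset.Icc 1 N) K} := by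
    rw [hOPT]; exact Set.Nonempty.csInf_mem hne hfin
  obtain ⟨πstar, hπstar, hπval⟩ := hmem
  have hπne : πstar.Nonempty := by
    rw [← Finset.card_pos, hπstar.2.2.2]; omega
  have hπcost : ∀ p ∈ πstar, cost p ≤ OPT := by
    intro p hp
    rw [← hπval]
    unfold kObj
    rw [dif_pos hπne]
    exact Finset.le_sup' cost hp
  -- the inductive claim
  have S : ∀ d : ℕ, d ≤ K - 1 →
      ∃ π : Finset (Finset ℕ), π.card = K - d ∧ (∀ p ∈ π, p ⊆ Finset.Icc 1 N) ∧
        (∀ p ∈ π, cost p ≤ OPT) ∧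
        ∀ x ∈ Finset.Icc 1 (b (K - d)), ∃ p ∈ π, x ∈ p := by
    intro d
    induction d with
    | zero =>
      intro _
      refine ⟨πstar, by rw [hπstar.2.2.2]; omega, ?_, hπcost, ?_⟩
      · intro p hp
        intro x hx
        have h2 := Finset.le_sup (f := id) hp
        rw [hπstar.2.2.1] at h2
        exact h2 hx
      · intro x hx
        simp only [Nat.sub_zero] at hx
        rw [hbK] at hx
        have : x ∈ πstar.sup id := by rw [hπstar.2.2.1]; exact hx
        rw [Finset.mem_sup] at this
        obtain ⟨p, hp, hxp⟩ := this
        exact ⟨p, hp, hxp⟩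
    | succ d ih =>
      intro hd
      obtain ⟨π, hcard, hsub, hcostle, hcover⟩ := ih (by omega)
      set k := K - (d + 1) with hk
      have hk1 : 1 ≤ k := by omega
      have hk2 : k ≤ K - 1 := by omega
      have hkk : K - d = k + 1 := by omega
      rw [hkk] at hcard hcover
      have hbmono : b k ≤ b (k + 1) := part1 k hk1 hk2
      by_cases hb0 : b (k + 1) = 0
      · -- trivial case: everything empty; drop one part
        obtain ⟨p0, hp0⟩ : π.Nonempty := by rw [← Finset.card_pos, hcard]; omega
        refine ⟨π.erase p0, ?_, ?_, ?_, ?_⟩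
        · rw [Finset.card_erase_of_mem hp0, hcard]; omega
        · exact fun p hp => hsub p (Finset.mem_of_mem_erase hp)
        · exact fun p hp => hcostle p (Finset.mem_of_mem_erase hp)
        · intro x hx
          rw [Finset.mem_Icc] at hx
          omega
      · -- main case
        have hbk1 : 1 ≤ b (k + 1) := by omega
        obtain ⟨Q, hQπ, hQmem⟩ := hcover (b (k+1))
          (Finset.mem_Icc.2 ⟨hbk1, le_refl _⟩)
        have hQne : Q.Nonempty := ⟨_, hQmem⟩
        have hQsub : ∀ x ∈ Q, x ≤ N := fun x hx =>
          (Finset.mem_Icc.1 (hsub Q hQπ hx)).2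
        have hQsub1 : ∀ x ∈ Q, 1 ≤ x := fun x hx =>
          (Finset.mem_Icc.1 (hsub Q hQπ hx)).1
        set a := Q.min' hQne with haQ
        have ha1 : 1 ≤ a := hQsub1 _ (Q.min'_mem hQne)
        have hab : a ≤ b (k + 1) := Q.min'_le _ hQmem
        have hbQ : b (k + 1) ≤ Q.max' hQne := Q.le_max' _ hQmem
        have hcQ : cost (Finset.Icc a (b (k+1))) ≤ OPT :=
          le_trans (cost_interval Q hQne hQsub (b (k+1)) hab hbQ) (hcostle Q hQπ)
        -- greedy minimality forces a > b k
        have hagt : b k + 1 ≤ a := by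
          by_contra hcon
          push_neg at hcon
          have : a - 1 < b k := by omega
          refine (hgreedy k hk1 hk2).2 (a - 1) this ?_
          rw [show a - 1 + 1 = a by omega]
          exact hcQ
        refine ⟨π.erase Q, ?_, ?_, ?_, ?_⟩
        · rw [Finset.card_erase_of_mem hQπ, hcard]; omega
        · exact fun p hp => hsub p (Finset.mem_of_mem_erase hp)
        · exact fun p hp => hcostle p (Finset.mem_of_mem_erase hp)
        · intro x hx
          rw [Finset.mem_Icc] at hx
          obtain ⟨p, hpπ, hxp⟩ := hcover x (Finset.mem_Icc.2 ⟨hx.1, by omega⟩)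
          refine ⟨p, Finset.mem_erase.2 ⟨?_, hpπ⟩, hxp⟩
          rintro rfl
          have h3 := Finset.min'_le _ _ hxp
          omega
  -- conclude
  obtain ⟨π, hcard, hsub, hcostle, hcover⟩ := S (K - 1) (le_refl _)
  have hcard1 : π.card = 1 := by rw [hcard]; omega
  have hb1 : K - (K - 1) = 1 := by omega
  rw [hb1] at hcover
  obtain ⟨P, rfl⟩ := Finset.card_eq_one.1 hcard1
  by_cases hb10 : b 1 = 0
  · rw [hb10, Finset.Icc_eq_empty (by omega), cost_empty]
    exact hOPTnn
  · have hb11 : 1 ≤ b 1 := by omega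
    obtain ⟨p, hp, h1P⟩ := hcover 1 (Finset.mem_Icc.2 ⟨le_refl _, hb11⟩)
    rw [Finset.mem_singleton] at hp
    rw [hp] at h1P
    obtain ⟨q, hq, hbP⟩ := hcover (b 1) (Finset.mem_Icc.2 ⟨hb11, le_refl _⟩)
    rw [Finset.mem_singleton] at hq
    rw [hq] at hbP
    have hPne : P.Nonempty := ⟨1, h1P⟩
    have hPsub : ∀ x ∈ P, x ≤ N := fun x hx =>
      (Finset.mem_Icc.1 (hsub P (Finset.mem_singleton_self P) hx)).2
    have hmin : P.min' hPne = 1 := by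
      apply le_antisymm (P.min'_le _ h1P)
      exact (Finset.mem_Icc.1 (hsub P (Finset.mem_singleton_self P) (P.min'_mem hPne))).1
    have hmax : b 1 ≤ P.max' hPne := P.le_max' _ hbP
    have := cost_interval P hPne hPsub (b 1) (by rw [hmin]; exact hb11) hmax
    rw [hmin] at this
    exact le_trans this (hcostle P (Finset.mem_singleton_self P))
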